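/- The number of orbits of G_{v0}(k) = {g ∈ GL_2(O) : g ≡ 1 mod ϖ^k} acting on P^1(F) by Möbius transformations equals q^k + q^{k−1} = (q+1)q^{k−1}. -/

import Mathlib

open Matrix Pointwise
open scoped OnePoint

noncomputable section

/-- `ϖ` is a uniformizer of the nonarchimedean field `F`. -/
def IsUniformizer (F : Type*) [NormedField F] (ϖ : F) : Prop :=
  ϖ ≠ 0 ∧ ‖ϖ‖ < 1 ∧ ∀ x : F, ‖x‖ < 1 → ‖x‖ ≤ ‖ϖ‖

/-- The principal congruence subgroup `G_{v₀}(k)` of level `k`: matrices in `GL₂(𝒪)`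
congruent to the identity modulo `ϖ^k` (entrywise, each entry of `g - 1` lies in `ϖ^k 𝒪`,
i.e. has norm at most `‖ϖ‖^k`). -/
def Gv0 (F : Type*) [NormedField F] (ϖ : F) (k : ℕ) : Set (GL (Fin 2) F) :=
  {g | ‖(g : Matrix (Fin 2) (Fin 2) F) 0 0 - 1‖ ≤ ‖ϖ‖ ^ k ∧
       ‖(g : Matrix (Fin 2) (Fin 2) F) 0 1‖ ≤ ‖ϖ‖ ^ k ∧
       ‖(g : Matrix (Fin 2) (Fin 2) F) 1 0‖ ≤ ‖ϖ‖ ^ k ∧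
       ‖(g : Matrix (Fin 2) (Fin 2) F) 1 1 - 1‖ ≤ ‖ϖ‖ ^ k}

/-- The diagonal matrix `diag(ϖ, 1)` as an element of `GL₂(F)`. -/
def dmat (F : Type*) [Field F] (ϖ : F) (h : ϖ ≠ 0) : GL (Fin 2) F :=
  Matrix.GeneralLinearGroup.mkOfDetNeZero !![ϖ, 0; 0, 1]
    (by simpa [Matrix.det_fin_two_of] using h)

/-- `G_{v₁}(k) = diag(ϖ,1) · G_{v₀}(k) · diag(ϖ,1)⁻¹`. -/
def Gv1 (F : Type*) [NormedField F] (ϖ : F) (h : ϖ ≠ 0) (k : ℕ) : Set (GL (Fin 2) F) :=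
  (fun g => dmat F ϖ h * g * (dmat F ϖ h)⁻¹) '' Gv0 F ϖ k

/-- The explicit set `H` of matrices `[[1+ϖ^k a, ϖ^k b],[ϖ^{k-1} c, 1+ϖ^k d]]`, `a,b,c,d ∈ 𝒪`;
this is the edge group `G_e(k)`. -/
def Ge (F : Type*) [NormedField F] (ϖ : F) (k : ℕ) : Set (GL (Fin 2) F) :=
  {g | ‖(g : Matrix (Fin 2) (Fin 2) F) 0 0 - 1‖ ≤ ‖ϖ‖ ^ k ∧
       ‖(g : Matrix (Fin 2) (Fin 2) F) 0 1‖ ≤ ‖ϖ‖ ^ k ∧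
       ‖(g : Matrix (Fin 2) (Fin 2) F) 1 0‖ ≤ ‖ϖ‖ ^ (k - 1) ∧
       ‖(g : Matrix (Fin 2) (Fin 2) F) 1 1 - 1‖ ≤ ‖ϖ‖ ^ k}

/-- The explicit description of `G_{v₁}(k)`: matrices
`[[1+ϖ^k a, ϖ^{k+1} b],[ϖ^{k-1} c, 1+ϖ^k d]]` with `a,b,c,d ∈ 𝒪`. -/
def Gv1ex (F : Type*) [NormedField F] (ϖ : F) (k : ℕ) : Set (GL (Fin 2) F) :=
  {g | ‖(g : Matrix (Fin 2) (Fin 2) F) 0 0 - 1‖ ≤ ‖ϖ‖ ^ k ∧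
       ‖(g : Matrix (Fin 2) (Fin 2) F) 0 1‖ ≤ ‖ϖ‖ ^ (k + 1) ∧
       ‖(g : Matrix (Fin 2) (Fin 2) F) 1 0‖ ≤ ‖ϖ‖ ^ (k - 1) ∧
       ‖(g : Matrix (Fin 2) (Fin 2) F) 1 1 - 1‖ ≤ ‖ϖ‖ ^ k}

open scoped Classical in
/-- The right Möbius action of `g = [[a,b],[c,d]]` on `ℙ¹(F) = F ∪ {∞}` (here modelled as
`Option F`, with `none = ∞`): `z·g = (az+c)/(bz+d)`, `∞·g = a/b`, with value `∞` when the
denominator vanishes. -/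
def moeb (F : Type*) [Field F] (g : Matrix (Fin 2) (Fin 2) F) : Option F → Option F
  | Option.some z => if g 0 1 * z + g 1 1 = 0 then Option.none
      else Option.some ((g 0 0 * z + g 1 0) / (g 0 1 * z + g 1 1))
  | Option.none => if g 0 1 = 0 then Option.none else Option.some (g 0 0 / g 0 1)

/-- The orbit of `z ∈ ℙ¹(F)` under a set `S` of elements of `GL₂(F)` acting on the right by
Möbius transformations. -/
def orb (F : Type*) [Field F] (S : Set (GL (Fin 2) F)) (z : Option F) : Set (Option F) :=
  {w | ∃ g ∈ S, moeb F (g : Matrix (Fin 2) (Fin 2) F) z = w}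

/-- `D` is an orbit of `S` on `ℙ¹(F)`. -/
def IsOrbit (F : Type*) [Field F] (S : Set (GL (Fin 2) F)) (D : Set (Option F)) : Prop :=
  ∃ z, D = orb F S z

/-- The region `B_w(∞, |ϖ|) = {w ∈ ℙ¹(F) : |1/w| ≤ |ϖ|} = {|w| ≥ |ϖ|⁻¹} ∪ {∞}`. -/
def regionInfty (F : Type*) [NormedField F] (ϖ : F) : Set (Option F) :=
  {w | w = Option.none ∨ ∃ z : F, w = Option.some z ∧ ‖ϖ‖⁻¹ ≤ ‖z‖}

/-- The coordinate `1/w` on `ℙ¹(F)`, with `1/∞ = 0`. -/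
def invc (F : Type*) [Field F] : Option F → F
  | Option.none => 0
  | Option.some z => z⁻¹

/-- The residue field of `F` has cardinality `q`: there are exactly `q` classes in
`𝒪/(ϖ)`, witnessed by a set of representatives. -/
def ResidueCard (F : Type*) [NormedField F] (ϖ : F) (q : ℕ) : Prop :=
  ∃ s : Finset F, s.card = q ∧ (∀ x ∈ s, ‖x‖ ≤ 1) ∧
    ∀ x : F, ‖x‖ ≤ 1 → ∃! y, y ∈ s ∧ ‖x - y‖ ≤ ‖ϖ‖

/-- The conjugate `h S h⁻¹` of a set of matrices. -/
def conjSet (F : Type*) [Field F] (h : GL (Fin 2) F) (S : Set (GL (Fin 2) F)) :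
    Set (GL (Fin 2) F) :=
  (fun g => h * g * h⁻¹) '' S

/-- The matrix `g_α = [[1,0],[α,ϖ]]` as an element of `GL₂(F)`. -/
def galpha (F : Type*) [Field F] (ϖ α : F) (h : ϖ ≠ 0) : GL (Fin 2) F :=
  Matrix.GeneralLinearGroup.mkOfDetNeZero !![1, 0; α, ϖ]
    (by simpa [Matrix.det_fin_two_of] using h)

/-- The diagonal matrix `diag(1, ϖ^n)` as an element of `GL₂(F)`. -/
def dmatN (F : Type*) [Field F] (ϖ : F) (h : ϖ ≠ 0) (n : ℕ) : GL (Fin 2) F :=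
  Matrix.GeneralLinearGroup.mkOfDetNeZero !![1, 0; 0, ϖ ^ n]
    (by simpa [Matrix.det_fin_two_of] using pow_ne_zero n h)

/-! Every `g ∈ G_{v₀}(k)` moves a point `x` of the unit disc by at most `|ϖ|^k` (the denominator
`bx + d` is a unit), and the lower unipotent matrices realise every such move, so the orbits in
`𝒪` are the discs `x + ϖ^k 𝒪`. The matrix `[[0,1],[1,0]]` normalises `G_{v₀}(k)` and acts as
`z ↦ 1/z`, so the orbits in `{|z| ≥ |ϖ|⁻¹} ∪ {∞}` are the inverses of the discs `u + ϖ^k 𝒪` with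
`u ∈ ϖ𝒪`. There are `|𝒪/ϖ^k| = q^k` of the former and `|ϖ𝒪/ϖ^k𝒪| = |𝒪/ϖ^{k-1}| = q^{k-1}` of the
latter. -/

open Metric

theorem natCard_orbits_eq_of_transversal {X ι : Type*} (o : X → Set X) (hself : ∀ z, z ∈ o z)
    (heq : ∀ {z w}, w ∈ o z → o w = o z) (f : ι → X) (hsurj : ∀ z, ∃ i, f i ∈ o z)
    (hinj : ∀ i j, f i ∈ o (f j) → i = j) :
    Nat.card {D : Set X // ∃ z, D = o z} = Nat.card ι := by
  refine (Nat.card_congr (Equiv.ofBijective (fun i => ⟨o (f i), f i, rfl⟩) ⟨?_, ?_⟩)).symm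
  · intro i j hij
    have hij : o (f i) = o (f j) := congrArg Subtype.val hij
    exact hinj i j (hij ▸ hself (f i))
  · rintro ⟨D, z, rfl⟩
    obtain ⟨i, hi⟩ := hsurj z
    exact ⟨i, Subtype.ext (heq hi)⟩

lemma norm_mul_le_of_le_of_le_one {K : Type*} [NormedField K] {x y : K} {r : ℝ} (hx : ‖x‖ ≤ r)
    (hy : ‖y‖ ≤ 1) : ‖x * y‖ ≤ r := by
  rw [norm_mul]
  exact (mul_le_of_le_one_right (norm_nonneg x) hy).trans hx

namespace IsUltrametricDist

variable {K : Type*} [NormedField K] [IsUltrametricDist K]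

lemma norm_add_le_of_le_of_le {x y : K} {r : ℝ} (hx : ‖x‖ ≤ r) (hy : ‖y‖ ≤ r) : ‖x + y‖ ≤ r :=
  (IsUltrametricDist.norm_add_le_max x y).trans (max_le hx hy)

lemma norm_sub_le_of_le_of_le {x y : K} {r : ℝ} (hx : ‖x‖ ≤ r) (hy : ‖y‖ ≤ r) : ‖x - y‖ ≤ r := by
  rw [sub_eq_add_neg]
  exact norm_add_le_of_le_of_le hx (by rwa [norm_neg])

lemma norm_one_add_of_norm_lt_one {x : K} (hx : ‖x‖ < 1) : ‖1 + x‖ = 1 := by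
  rw [IsUltrametricDist.norm_add_eq_max_of_norm_ne_norm (by rw [norm_one]; exact hx.ne'),
    norm_one, max_eq_left hx.le]

lemma norm_le_of_mem_closedBall_of_le {x y : K} {r R : ℝ} (hx : ‖x‖ ≤ R) (hr : r ≤ R)
    (hy : y ∈ closedBall x r) : ‖y‖ ≤ R := by
  rw [mem_closedBall, dist_eq_norm] at hy
  rw [← sub_add_cancel y x]
  exact norm_add_le_of_le_of_le (hy.trans hr) hx

end IsUltrametricDist

open IsUltrametricDist

section ResidueSystem

variable {K : Type*} [NormedField K]

/-- `T ⊆ 𝒪` is a set of representatives of the classes of `𝒪` modulo the closed ball of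
radius `r` around `0`. -/
def IsResidueSystem (T : Finset K) (r : ℝ) : Prop :=
  (∀ t ∈ T, ‖t‖ ≤ 1) ∧ ∀ x : K, ‖x‖ ≤ 1 → ∃! t, t ∈ T ∧ ‖x - t‖ ≤ r

namespace IsResidueSystem

variable {T : Finset K} {r : ℝ}

lemma nonneg (hT : IsResidueSystem T r) : 0 ≤ r := by
  obtain ⟨t, ⟨-, ht⟩, -⟩ := hT.2 0 (by simp)
  exact (norm_nonneg _).trans ht

lemma eq_of_norm_sub_le (hT : IsResidueSystem T r) {t t' : K} (ht : t ∈ T) (ht' : t' ∈ T)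
    (h : ‖t - t'‖ ≤ r) : t = t' :=
  (hT.2 t (hT.1 t ht)).unique ⟨ht, by simpa using hT.nonneg⟩ ⟨ht', h⟩

variable [IsUltrametricDist K] {s : Finset K} {ϖ : K}

lemma injOn_add_mul (hs : IsResidueSystem s ‖ϖ‖) (hT : IsResidueSystem T r) (hϖ : ϖ ≠ 0) :
    Set.InjOn (fun p : K × K => p.1 + ϖ * p.2) ↑(s ×ˢ T) := by
  rintro ⟨y, t⟩ hyt ⟨y', t'⟩ hyt' heq
  simp only [Finset.coe_product, Set.mem_prod, Finset.mem_coe] at hyt hyt' heq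
  have hy : y = y' := hs.eq_of_norm_sub_le hyt.1 hyt'.1 <| by
    rw [show y - y' = ϖ * (t' - t) by linear_combination heq]
    exact norm_mul_le_of_le_of_le_one le_rfl
      (norm_sub_le_of_le_of_le (hT.1 _ hyt'.2) (hT.1 _ hyt.2))
  subst hy
  simp [mul_left_cancel₀ hϖ (add_left_cancel heq)]

variable [DecidableEq K] in
/-- Digit expansion: `x = y + ϖ t` with `y` read off modulo `ϖ` and `t` modulo `r`. -/
lemma image_add_mul (hs : IsResidueSystem s ‖ϖ‖) (hT : IsResidueSystem T r) (hϖ : ϖ ≠ 0)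
    (hϖ1 : ‖ϖ‖ ≤ 1) (hr : r ≤ 1) :
    IsResidueSystem ((s ×ˢ T).image fun p => p.1 + ϖ * p.2) (‖ϖ‖ * r) := by
  have hϖpos : 0 < ‖ϖ‖ := norm_pos_iff.mpr hϖ
  refine ⟨?_, fun x hx => ?_⟩
  · simp only [Finset.mem_image, Finset.mem_product]
    rintro _ ⟨⟨y, t⟩, ⟨hy, ht⟩, rfl⟩
    exact norm_add_le_of_le_of_le (hs.1 y hy) (norm_mul_le_of_le_of_le_one hϖ1 (hT.1 t ht))
  have hscale : ∀ y t : K, ‖x - (y + ϖ * t)‖ = ‖ϖ‖ * ‖(x - y) / ϖ - t‖ := fun y t => by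
    rw [← norm_mul]; congr 1; field_simp; ring
  obtain ⟨y, ⟨hy, hxy⟩, hy_unique⟩ := hs.2 x hx
  have hdiv : ‖(x - y) / ϖ‖ ≤ 1 := by rwa [norm_div, div_le_one hϖpos]
  obtain ⟨t, ⟨ht, hxt⟩, ht_unique⟩ := hT.2 _ hdiv
  refine ⟨y + ϖ * t, ⟨Finset.mem_image.mpr ⟨(y, t), Finset.mem_product.mpr ⟨hy, ht⟩, rfl⟩, ?_⟩, ?_⟩
  · rw [hscale]
    exact mul_le_mul_of_nonneg_left hxt hϖpos.le
  · simp only [Finset.mem_image, Finset.mem_product]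
    rintro _ ⟨⟨⟨y', t'⟩, ⟨hy', ht'⟩, rfl⟩, hclose⟩
    have hxy' : ‖x - y'‖ ≤ ‖ϖ‖ := by
      rw [show x - y' = (x - (y' + ϖ * t')) + ϖ * t' by ring]
      exact norm_add_le_of_le_of_le (hclose.trans (mul_le_of_le_one_right hϖpos.le hr))
        (norm_mul_le_of_le_of_le_one le_rfl (hT.1 t' ht'))
    obtain rfl := hy_unique y' ⟨hy', hxy'⟩
    rw [hscale] at hclose
    rw [ht_unique t' ⟨ht', le_of_mul_le_mul_left hclose hϖpos⟩]

lemma exists_pow (hs : IsResidueSystem s ‖ϖ‖) (hϖ : ϖ ≠ 0) (hϖ1 : ‖ϖ‖ ≤ 1) (n : ℕ) :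
    ∃ T : Finset K, T.card = s.card ^ n ∧ IsResidueSystem T (‖ϖ‖ ^ n) := by
  classical
  induction n with
  | zero => exact ⟨{0}, by simp, by simp, fun x hx => ⟨0, by simpa using hx, by simp⟩⟩
  | succ n ih =>
    obtain ⟨T, hcard, hT⟩ := ih
    refine ⟨(s ×ˢ T).image fun p => p.1 + ϖ * p.2, ?_, ?_⟩
    · rw [Finset.card_image_of_injOn (hs.injOn_add_mul hT hϖ), Finset.card_product, hcard,
        pow_succ']
    · rw [pow_succ']
      exact hs.image_add_mul hT hϖ hϖ1 (pow_le_one₀ (norm_nonneg ϖ) hϖ1)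

end IsResidueSystem

end ResidueSystem

section Moebius

variable {K : Type*} [Field K]

def homog : Option K → Fin 2 → K
  | some z => ![z, 1]
  | none => ![1, 0]

open scoped Classical in
def projPt (v : Fin 2 → K) : Option K :=
  if v 1 = 0 then none else some (v 0 / v 1)

lemma homog_ne_zero (z : Option K) : homog z ≠ 0 := by
  cases z <;> simp [homog, funext_iff, Fin.forall_fin_two]

lemma projPt_smul {c : K} (hc : c ≠ 0) (v : Fin 2 → K) : projPt (c • v) = projPt v := by
  by_cases h : v 1 = 0 <;> simp [projPt, h, hc, mul_div_mul_left]

lemma exists_homog_projPt_eq_smul {v : Fin 2 → K} (hv : v ≠ 0) :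
    ∃ c : K, c ≠ 0 ∧ homog (projPt v) = c • v := by
  by_cases h1 : v 1 = 0
  · have h0 : v 0 ≠ 0 := fun h0 => hv (funext <| Fin.forall_fin_two.mpr ⟨h0, h1⟩)
    refine ⟨(v 0)⁻¹, inv_ne_zero h0, funext <| Fin.forall_fin_two.mpr ?_⟩
    simp [projPt, homog, h1, h0]
  · refine ⟨(v 1)⁻¹, inv_ne_zero h1, funext <| Fin.forall_fin_two.mpr ?_⟩
    simp [projPt, homog, h1, div_eq_inv_mul]

/-- `moeb` is the action of matrices on lines of `K²` by right multiplication of row vectors;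
this makes `moeb_mul` a matter of associativity. -/
lemma moeb_eq_projPt (g : Matrix (Fin 2) (Fin 2) K) (z : Option K) :
    moeb K g z = projPt (homog z ᵥ* g) := by
  cases z with
  | none => by_cases h : g 0 1 = 0 <;> simp [moeb, projPt, homog, Matrix.vecMul, dotProduct, h]
  | some z =>
    by_cases h : g 0 1 * z + g 1 1 = 0 <;>
      simp [moeb, projPt, homog, Matrix.vecMul, dotProduct, Fin.sum_univ_two, mul_comm z, h]

lemma moeb_one (z : Option K) : moeb K 1 z = z := by
  cases z <;> simp [moeb]

lemma moeb_mul (g h : GL (Fin 2) K) (z : Option K) :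
    moeb K ↑(g * h) z = moeb K ↑h (moeb K ↑g z) := by
  have hv : homog z ᵥ* (g : Matrix (Fin 2) (Fin 2) K) ≠ 0 := fun h0 =>
    homog_ne_zero z <| Matrix.vecMul_injective_of_isUnit g.isUnit <| by
      simp only [h0, Matrix.zero_vecMul]
  obtain ⟨c, hc, hcv⟩ := exists_homog_projPt_eq_smul hv
  rw [moeb_eq_projPt, moeb_eq_projPt, moeb_eq_projPt, hcv, Matrix.smul_vecMul, projPt_smul hc,
    Matrix.vecMul_vecMul, Units.val_mul]

lemma mem_orb_self {S : Set (GL (Fin 2) K)} (hS : 1 ∈ S) (z : Option K) : z ∈ orb K S z :=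
  ⟨1, hS, by rw [Units.val_one, moeb_one]⟩

end Moebius

section Inversion

variable {K : Type*} [Field K]

variable (K) in
def swapGL : GL (Fin 2) K :=
  Matrix.GeneralLinearGroup.mkOfDetNeZero !![0, 1; 1, 0] (by simp [Matrix.det_fin_two_of])

/-- The involution `z ↦ 1/z` of `ℙ¹(K)`. -/
def inversion (z : Option K) : Option K := moeb K (swapGL K) z

lemma swapGL_mul_self : swapGL K * swapGL K = 1 := by
  ext i j
  fin_cases i <;> fin_cases j <;> simp [swapGL, Matrix.mul_apply, Fin.sum_univ_two]

lemma inversion_involutive : Function.Involutive (inversion : Option K → Option K) := fun z => by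
  rw [inversion, inversion, ← moeb_mul, swapGL_mul_self, Units.val_one, moeb_one]

lemma inversion_some_zero : inversion (some (0 : K)) = none := by
  simp [inversion, moeb, swapGL]

lemma inversion_some_of_ne_zero {x : K} (hx : x ≠ 0) : inversion (some x) = some x⁻¹ := by
  simp [inversion, moeb, swapGL, hx]

lemma moeb_swapGL_conj (g : GL (Fin 2) K) (z : Option K) :
    moeb K ↑(swapGL K * g * swapGL K) z = inversion (moeb K g (inversion z)) := by
  simp only [inversion, moeb_mul]

lemma orb_inversion {S : Set (GL (Fin 2) K)} (hS : ∀ g ∈ S, swapGL K * g * swapGL K ∈ S)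
    (z : Option K) : orb K S (inversion z) = inversion '' orb K S z := by
  ext w
  constructor
  · rintro ⟨g, hg, rfl⟩
    refine ⟨_, ⟨_, hS g hg, rfl⟩, ?_⟩
    rw [moeb_swapGL_conj, inversion_involutive]
  · rintro ⟨_, ⟨g, hg, rfl⟩, rfl⟩
    refine ⟨_, hS g hg, ?_⟩
    rw [moeb_swapGL_conj, inversion_involutive]

end Inversion

section CongruenceSubgroup

variable {F : Type*} [NormedField F] {ϖ : F} {k : ℕ}

lemma one_mem_Gv0 : (1 : GL (Fin 2) F) ∈ Gv0 F ϖ k := by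
  simp [Gv0, pow_nonneg (norm_nonneg ϖ)]

lemma swapGL_conj_mem_Gv0 {g : GL (Fin 2) F} (hg : g ∈ Gv0 F ϖ k) :
    swapGL F * g * swapGL F ∈ Gv0 F ϖ k := by
  obtain ⟨h00, h01, h10, h11⟩ := hg
  simp [Gv0, swapGL, Matrix.mul_apply, Matrix.vecMul, dotProduct, Fin.sum_univ_two, *]

def lowerUnipotent (t : F) : GL (Fin 2) F :=
  Matrix.GeneralLinearGroup.mkOfDetNeZero !![1, 0; t, 1] (by simp [Matrix.det_fin_two_of])

lemma lowerUnipotent_mem_Gv0 {t : F} (ht : ‖t‖ ≤ ‖ϖ‖ ^ k) : lowerUnipotent t ∈ Gv0 F ϖ k := by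
  simp [Gv0, lowerUnipotent, ht, pow_nonneg (norm_nonneg ϖ)]

lemma moeb_lowerUnipotent (t x : F) : moeb F (lowerUnipotent t) (some x) = some (x + t) := by
  simp [moeb, lowerUnipotent]

variable [IsUltrametricDist F]

lemma moeb_some_of_mem_Gv0 (hε : ‖ϖ‖ ^ k < 1) {g : GL (Fin 2) F} (hg : g ∈ Gv0 F ϖ k) {x : F}
    (hx : ‖x‖ ≤ 1) : ∃ y, ‖y - x‖ ≤ ‖ϖ‖ ^ k ∧ moeb F g (some x) = some y := by
  obtain ⟨hA, hB, hC, hD⟩ := hg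
  set M := (g : Matrix (Fin 2) (Fin 2) F)
  have hden : ‖M 0 1 * x + M 1 1‖ = 1 := by
    rw [show M 0 1 * x + M 1 1 = 1 + (M 0 1 * x + (M 1 1 - 1)) by ring]
    exact norm_one_add_of_norm_lt_one
      ((norm_add_le_of_le_of_le (norm_mul_le_of_le_of_le_one hB hx) hD).trans_lt hε)
  have hden0 : M 0 1 * x + M 1 1 ≠ 0 := norm_ne_zero_iff.mp (by rw [hden]; exact one_ne_zero)
  refine ⟨_, ?_, if_neg hden0⟩
  have hdiff : (M 0 0 * x + M 1 0) / (M 0 1 * x + M 1 1) - x =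
      ((M 0 0 - 1) * x + M 1 0 - M 0 1 * (x * x) - (M 1 1 - 1) * x) / (M 0 1 * x + M 1 1) := by
    rw [eq_div_iff hden0, sub_mul, div_mul_cancel₀ _ hden0]
    ring
  rw [hdiff, norm_div, hden, div_one]
  have hxx : ‖x * x‖ ≤ 1 := norm_mul_le_of_le_of_le_one hx hx
  exact norm_sub_le_of_le_of_le (norm_sub_le_of_le_of_le
    (norm_add_le_of_le_of_le (norm_mul_le_of_le_of_le_one hA hx) hC)
    (norm_mul_le_of_le_of_le_one hB hxx)) (norm_mul_le_of_le_of_le_one hD hx)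

lemma orb_Gv0_some (hε : ‖ϖ‖ ^ k < 1) {x : F} (hx : ‖x‖ ≤ 1) :
    orb F (Gv0 F ϖ k) (some x) = some '' closedBall x (‖ϖ‖ ^ k) := by
  ext w
  constructor
  · rintro ⟨g, hg, rfl⟩
    obtain ⟨y, hy, hgy⟩ := moeb_some_of_mem_Gv0 hε hg hx
    exact ⟨y, by rwa [mem_closedBall, dist_eq_norm], hgy.symm⟩
  · rintro ⟨y, hy, rfl⟩
    rw [mem_closedBall, dist_eq_norm] at hy
    exact ⟨_, lowerUnipotent_mem_Gv0 hy, by rw [moeb_lowerUnipotent, add_sub_cancel]⟩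

lemma orb_Gv0_inversion_some (hε : ‖ϖ‖ ^ k < 1) {x : F} (hx : ‖x‖ ≤ 1) :
    orb F (Gv0 F ϖ k) (inversion (some x)) =
      (fun y => inversion (some y)) '' closedBall x (‖ϖ‖ ^ k) := by
  rw [orb_inversion (fun _ => swapGL_conj_mem_Gv0), orb_Gv0_some hε hx, Set.image_image]

end CongruenceSubgroup

lemma some_ne_inversion_some {F : Type*} [NormedField F] {x u : F} (hx : ‖x‖ ≤ 1)
    (hu : ‖u‖ < 1) : some x ≠ inversion (some u) := by
  by_cases hu0 : u = 0
  · simp [hu0, inversion_some_zero]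
  rw [inversion_some_of_ne_zero hu0, ne_eq, Option.some_inj]
  rintro rfl
  rw [norm_inv] at hx
  exact absurd hx (not_le.mpr (one_lt_inv₀ (norm_pos_iff.mpr hu0) |>.mpr hu))

section Uniformizer

variable {F : Type*} [NormedField F] {ϖ : F} (hϖ : IsUniformizer F ϖ)
include hϖ

lemma IsUniformizer.norm_pow_lt_one {k : ℕ} (hk : k ≠ 0) : ‖ϖ‖ ^ k < 1 :=
  pow_lt_one₀ (norm_nonneg ϖ) hϖ.2.1 hk

lemma IsUniformizer.exists_eq_some_or_eq_inversion_some (z : Option F) :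
    (∃ x, ‖x‖ ≤ 1 ∧ z = some x) ∨ ∃ u, ‖u‖ ≤ ‖ϖ‖ ∧ z = inversion (some u) := by
  rcases z with _ | x
  · exact Or.inr ⟨0, by simp, inversion_some_zero.symm⟩
  by_cases hx : ‖x‖ ≤ 1
  · exact Or.inl ⟨x, hx, rfl⟩
  have hx0 : x ≠ 0 := by rintro rfl; simp at hx
  refine Or.inr ⟨x⁻¹, hϖ.2.2 _ ?_, ?_⟩
  · rw [norm_inv]
    exact inv_lt_one_of_one_lt₀ (not_le.mp hx)
  · rw [inversion_some_of_ne_zero (inv_ne_zero hx0), inv_inv]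

lemma orb_Gv0_eq_of_mem [IsUltrametricDist F] {k : ℕ} (hε : ‖ϖ‖ ^ k < 1) {z w : Option F}
    (hw : w ∈ orb F (Gv0 F ϖ k) z) : orb F (Gv0 F ϖ k) w = orb F (Gv0 F ϖ k) z := by
  -- Both kinds of orbit are images of discs, and an ultrametric disc is centred at each point.
  have key : ∀ φ : F → Option F,
      (∀ x, ‖x‖ ≤ 1 → orb F (Gv0 F ϖ k) (φ x) = φ '' closedBall x (‖ϖ‖ ^ k)) →
      ∀ x, ‖x‖ ≤ 1 → w ∈ orb F (Gv0 F ϖ k) (φ x) →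
      orb F (Gv0 F ϖ k) w = orb F (Gv0 F ϖ k) (φ x) := by
    intro φ hφ x hx hw
    rw [hφ x hx] at hw
    obtain ⟨y, hy, rfl⟩ := hw
    rw [hφ x hx, hφ y (norm_le_of_mem_closedBall_of_le hx hε.le hy), closedBall_eq_of_mem hy]
  rcases hϖ.exists_eq_some_or_eq_inversion_some z with ⟨x, hx, rfl⟩ | ⟨u, hu, rfl⟩
  · exact key some (fun _ => orb_Gv0_some hε) x hx hw
  · exact key (fun y => inversion (some y)) (fun _ => orb_Gv0_inversion_some hε) u
      (hu.trans hϖ.2.1.le) hw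

end Uniformizer

section Transversal

variable {F : Type*} [NormedField F] {ϖ : F}

lemma norm_mul_sub_mul_le_pow_succ_iff (hϖ : ϖ ≠ 0) (a b : F) (m : ℕ) :
    ‖ϖ * a - ϖ * b‖ ≤ ‖ϖ‖ ^ (m + 1) ↔ ‖a - b‖ ≤ ‖ϖ‖ ^ m := by
  rw [← mul_sub, norm_mul, pow_succ', mul_le_mul_iff_right₀ (norm_pos_iff.mpr hϖ)]

def orbitRep (ϖ : F) : F ⊕ F → Option F
  | .inl t => some t
  | .inr t => inversion (some (ϖ * t))

variable [IsUltrametricDist F] (hϖ : IsUniformizer F ϖ) {m : ℕ} {T₁ T₂ : Finset F}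
  (hT₁ : IsResidueSystem T₁ (‖ϖ‖ ^ (m + 1))) (hT₂ : IsResidueSystem T₂ (‖ϖ‖ ^ m))
include hϖ hT₁ hT₂

lemma exists_orbitRep_mem_orb_Gv0 (z : Option F) :
    ∃ i ∈ T₁.disjSum T₂, orbitRep ϖ i ∈ orb F (Gv0 F ϖ (m + 1)) z := by
  have hε : ‖ϖ‖ ^ (m + 1) < 1 := hϖ.norm_pow_lt_one m.succ_ne_zero
  rcases hϖ.exists_eq_some_or_eq_inversion_some z with ⟨x, hx, rfl⟩ | ⟨u, hu, rfl⟩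
  · obtain ⟨t, ⟨ht, hxt⟩, -⟩ := hT₁.2 x hx
    refine ⟨.inl t, Finset.inl_mem_disjSum.mpr ht, ?_⟩
    rw [orbitRep, orb_Gv0_some hε hx]
    exact ⟨t, by rwa [mem_closedBall, dist_eq_norm, norm_sub_rev], rfl⟩
  · have hu' : ‖u / ϖ‖ ≤ 1 := by rwa [norm_div, div_le_one (norm_pos_iff.mpr hϖ.1)]
    obtain ⟨t, ⟨ht, hut⟩, -⟩ := hT₂.2 _ hu'
    refine ⟨.inr t, Finset.inr_mem_disjSum.mpr ht, ?_⟩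
    rw [orbitRep, orb_Gv0_inversion_some hε (hu.trans hϖ.2.1.le)]
    refine ⟨ϖ * t, ?_, rfl⟩
    rw [mem_closedBall, dist_eq_norm, ← mul_div_cancel₀ u hϖ.1,
      norm_mul_sub_mul_le_pow_succ_iff hϖ.1, norm_sub_rev]
    exact hut

lemma eq_of_orbitRep_mem_orb_Gv0 {i j : F ⊕ F} (hi : i ∈ T₁.disjSum T₂)
    (hj : j ∈ T₁.disjSum T₂) (h : orbitRep ϖ i ∈ orb F (Gv0 F ϖ (m + 1)) (orbitRep ϖ j)) :
    i = j := by
  have hε : ‖ϖ‖ ^ (m + 1) < 1 := hϖ.norm_pow_lt_one m.succ_ne_zero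
  have hεϖ : ‖ϖ‖ ^ (m + 1) ≤ ‖ϖ‖ := pow_le_of_le_one (norm_nonneg ϖ) hϖ.2.1.le m.succ_ne_zero
  have hϖt : ∀ t ∈ T₂, ‖ϖ * t‖ ≤ ‖ϖ‖ := fun t ht => norm_mul_le_of_le_of_le_one le_rfl (hT₂.1 t ht)
  rcases i with t | t <;> rcases j with t' | t' <;>
    simp only [Finset.inl_mem_disjSum, Finset.inr_mem_disjSum] at hi hj <;>
    simp only [orbitRep] at h
  · rw [orb_Gv0_some hε (hT₁.1 t' hj)] at h
    obtain ⟨y, hy, hyt⟩ := h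
    rw [Option.some_inj] at hyt
    subst hyt
    rw [hT₁.eq_of_norm_sub_le hi hj (by rwa [mem_closedBall, dist_eq_norm] at hy)]
  · rw [orb_Gv0_inversion_some hε ((hϖt t' hj).trans hϖ.2.1.le)] at h
    obtain ⟨v, hv, hvt⟩ := h
    exact absurd hvt.symm (some_ne_inversion_some (hT₁.1 t hi)
      ((norm_le_of_mem_closedBall_of_le (hϖt t' hj) hεϖ hv).trans_lt hϖ.2.1))
  · rw [orb_Gv0_some hε (hT₁.1 t' hj)] at h
    obtain ⟨y, hy, hyt⟩ := h
    exact absurd hyt (some_ne_inversion_some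
      (norm_le_of_mem_closedBall_of_le (hT₁.1 t' hj) hε.le hy) ((hϖt t hi).trans_lt hϖ.2.1))
  · rw [orb_Gv0_inversion_some hε ((hϖt t' hj).trans hϖ.2.1.le)] at h
    obtain ⟨v, hv, hvt⟩ := h
    rw [inversion_involutive.injective.eq_iff, Option.some_inj] at hvt
    subst hvt
    rw [mem_closedBall, dist_eq_norm, norm_mul_sub_mul_le_pow_succ_iff hϖ.1] at hv
    rw [hT₂.eq_of_norm_sub_le hi hj hv]

end Transversal

theorem statement10_general (F : Type*) [NontriviallyNormedField F] [IsUltrametricDist F]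
    (ϖ : F) (hϖ : IsUniformizer F ϖ) (q : ℕ) (hq : ResidueCard F ϖ q)
    (k : ℕ) (hk : 1 ≤ k) :
    Nat.card {D : Set (Option F) // IsOrbit F (Gv0 F ϖ k) D} = q ^ k + q ^ (k - 1) := by
  obtain ⟨m, rfl⟩ : ∃ m, k = m + 1 := ⟨k - 1, by omega⟩
  obtain ⟨s, rfl, hs⟩ : ∃ s : Finset F, s.card = q ∧ IsResidueSystem s ‖ϖ‖ := hq
  obtain ⟨T₁, hT₁_card, hT₁⟩ := hs.exists_pow hϖ.1 hϖ.2.1.le (m + 1)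
  obtain ⟨T₂, hT₂_card, hT₂⟩ := hs.exists_pow hϖ.1 hϖ.2.1.le m
  unfold IsOrbit
  rw [natCard_orbits_eq_of_transversal _ (mem_orb_self one_mem_Gv0)
    (orb_Gv0_eq_of_mem hϖ (hϖ.norm_pow_lt_one m.succ_ne_zero)) (fun i : T₁.disjSum T₂ => orbitRep ϖ i)
    (fun z => by simpa using exists_orbitRep_mem_orb_Gv0 hϖ hT₁ hT₂ z)
    (fun i j h => Subtype.ext (eq_of_orbitRep_mem_orb_Gv0 hϖ hT₁ hT₂ i.2 j.2 h)),
    Nat.card_eq_finsetCard, Finset.card_disjSum, hT₁_card, hT₂_card, Nat.add_sub_cancel]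

theorem statement10 (p : ℕ) [Fact p.Prime] (F : Type*) [NontriviallyNormedField F]
    [IsUltrametricDist F] [NormedAlgebra ℚ_[p] F] [FiniteDimensional ℚ_[p] F]
    (ϖ : F) (hϖ : IsUniformizer F ϖ) (q : ℕ) (hq : ResidueCard F ϖ q)
    (k : ℕ) (hk : 1 ≤ k) :
    Nat.card {D : Set (Option F) // IsOrbit F (Gv0 F ϖ k) D} = q ^ k + q ^ (k - 1) :=
  statement10_general F ϖ hϖ q hq k hk
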